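/- Let Δ : U_q(sl_n(ℂ)) → U_q(sl_n(ℂ)) ⊗_ℂ U_q(sl_n(ℂ)) be any ℂ-algebra homomorphism satisfying Δ(e_i) = e_i ⊗ k_i^{-1} + 1 ⊗ e_i, Δ(f_i) = f_i ⊗ 1 + k_i ⊗ f_i, and Δ(k_i^{±1}) = k_i^{±1} ⊗ k_i^{±1} for all i = 1,…,n−1. Then for all 1 ≤ i < j ≤ n one has Δ(E_{j,i}) = K_{i,j} ⊗ E_{j,i} + E_{j,i} ⊗ 1 + (q − q^{-1}) Σ_{i<k<j} E_{k,i}K_{k,j} ⊗ E_{j,k}. -/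

import Mathlib

noncomputable section

/-- The `q`-number `[s]_q = (q^s - q^{-s})/(q - q^{-1})`. -/
def qnum (q : ℂ) (s : ℕ) : ℂ := (q ^ s - q⁻¹ ^ s) / (q - q⁻¹)

/-- The Cartan matrix of `sl_n`: `a_{ii} = 2`, `a_{ij} = -1` if `|i-j| = 1`, else `0`. -/
def cartan (i j : ℕ) : ℤ := if i = j then 2 else if i + 1 = j ∨ j + 1 = i then -1 else 0

variable {U : Type*} [Ring U] [Algebra ℂ U]

/-- Auxiliary: `EupAux q e i g = E_{i,i+1+g}`, the raising root vectors indexed by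
the gap `g`, built from the generators `e` by
`E_{i,i+1} = e_i`, `E_{i,j} = E_{i,j-1}E_{j-1,j} − q·E_{j-1,j}E_{i,j-1}`. -/
def EupAux (q : ℂ) (e : ℕ → U) (i : ℕ) : ℕ → U
  | 0 => e i
  | g + 1 => EupAux q e i g * e (i + g + 1) - q • (e (i + g + 1) * EupAux q e i g)

/-- The raising root vector `E_{i,j}` (intended for `i < j`). -/
def Eup (q : ℂ) (e : ℕ → U) (i j : ℕ) : U := EupAux q e i (j - i - 1)

/-- Auxiliary: `EdnAux q f j g = E_{j,j-1-g}`, the lowering root vectors indexed by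
the gap `g`, built from the generators `f` by
`E_{i+1,i} = f_i`, `E_{j,i} = E_{j,i+1}E_{i+1,i} − q⁻¹·E_{i+1,i}E_{j,i+1}`. -/
def EdnAux (q : ℂ) (f : ℕ → U) (j : ℕ) : ℕ → U
  | 0 => f (j - 1)
  | g + 1 => EdnAux q f j g * f (j - g - 2) - q⁻¹ • (f (j - g - 2) * EdnAux q f j g)

/-- The lowering root vector `E_{j,i}` (intended for `i < j`). -/
def Edn (q : ℂ) (f : ℕ → U) (j i : ℕ) : U := EdnAux q f j (j - i - 1)

/-- `K_{i,j} = k_i k_{i+1} ⋯ k_{j-1}`. -/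
def Kprod (k : ℕ → U) (i j : ℕ) : U := ((List.range' i (j - i)).map k).prod

/-!
Descending induction on `i`. Since `E_{j,i} = E_{j,i+1} f_i - q⁻¹ f_i E_{j,i+1}` and `Δ` is an
algebra map, `Δ(E_{j,i})` is the `q⁻¹`-commutator of `Δ(E_{j,i+1})` with `f_i ⊗ 1 + k_i ⊗ f_i`.
Expanding bilinearly leaves brackets of pure tensors in which one tensor factor commutes, so each
reduces to a `q⁻¹`-commutator in a single factor: `k_i` commutes with every `K_{c,j}` (`c > i`),
`f_i` with `K_{c,j}` and `E_{j,c}` (`c > i + 1`), while `k_i E_{c,i+1} = q E_{c,i+1} k_i` and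
`K_{i+1,j} f_i = q f_i K_{i+1,j}`. The brackets with `k_i ⊗ f_i` of the terms `E ⊗ 1` and of the
sum therefore vanish, and the bracket of `K_{i+1,j} ⊗ E_{j,i+1}` with `f_i ⊗ 1` is the new
summand `c = i + 1`.
-/

open scoped TensorProduct

section QCommutator

variable {R A B : Type*} [CommRing R] [Ring A] [Algebra R A] [Ring B] [Algebra R B]

def qCommutator (t : R) : A →ₗ[R] A →ₗ[R] A :=
  LinearMap.mul R A - t • (LinearMap.mul R A).flip

lemma qCommutator_apply (t : R) (a b : A) : qCommutator t a b = a * b - t • (b * a) := rfl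

lemma AlgHom.map_qCommutator (φ : A →ₐ[R] B) (t : R) (a b : A) :
    φ (qCommutator t a b) = qCommutator t (φ a) (φ b) := by
  simp only [qCommutator_apply, map_sub, map_mul, map_smul]

lemma qCommutator_mul_left_of_commute (t : R) {a b c : A} (h : Commute b c) :
    qCommutator t (a * c) b = qCommutator t a b * c := by
  simp only [qCommutator_apply, sub_mul, smul_mul_assoc, mul_assoc, h.eq]

lemma qCommutator_of_semiconjBy (t : R) {a b : A} {c : R} (h : SemiconjBy a b (c • b)) :
    qCommutator t a b = (c - t) • (b * a) := by
  rw [qCommutator_apply, h.eq, smul_mul_assoc, sub_smul]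

lemma qCommutator_eq_zero_of_semiconjBy {t c : R} (htc : t * c = 1) {a b : A}
    (h : SemiconjBy b a (c • a)) : qCommutator t a b = 0 := by
  rw [qCommutator_apply, h.eq, smul_mul_assoc, smul_smul, htc, one_smul, sub_self]

lemma SemiconjBy.qCommutator (t : R) {a x y x' y' : A} (h : SemiconjBy a x y)
    (h' : SemiconjBy a x' y') : SemiconjBy a (qCommutator t x x') (qCommutator t y y') := by
  simp only [qCommutator_apply]
  exact (h.mul_right h').sub_right ((h'.mul_right h).smul_right t)

lemma qCommutator_tmul_of_commute_right (t : R) (a c : A) {b d : B} (h : Commute b d) :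
    qCommutator t (a ⊗ₜ[R] b) (c ⊗ₜ d) = qCommutator t a c ⊗ₜ (b * d) := by
  simp only [qCommutator_apply, Algebra.TensorProduct.tmul_mul_tmul, h.eq, TensorProduct.sub_tmul,
    TensorProduct.smul_tmul']

lemma qCommutator_tmul_of_commute_left (t : R) {a c : A} (b d : B) (h : Commute a c) :
    qCommutator t (a ⊗ₜ[R] b) (c ⊗ₜ d) = (a * c) ⊗ₜ qCommutator t b d := by
  simp only [qCommutator_apply, Algebra.TensorProduct.tmul_mul_tmul, h.eq, TensorProduct.tmul_sub,
    TensorProduct.tmul_smul]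

end QCommutator

section Kprod

variable {U : Type*} [Ring U]

lemma Kprod_succ_self (ka : ℕ → U) (i : ℕ) : Kprod ka i (i + 1) = ka i := by
  simp [Kprod]

lemma Kprod_eq_mul (ka : ℕ → U) {i j : ℕ} (h : i < j) :
    Kprod ka i j = ka i * Kprod ka (i + 1) j := by
  rw [Kprod, Kprod, show j - i = j - (i + 1) + 1 by omega, List.range'_succ, List.map_cons,
    List.prod_cons]

lemma commute_Kprod (ka : ℕ → U) (x : U) {i j : ℕ}
    (h : ∀ s, i ≤ s → s < j → Commute x (ka s)) : Commute x (Kprod ka i j) := by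
  refine Commute.list_prod_right _ _ fun y hy => ?_
  obtain ⟨s, hs, rfl⟩ := List.mem_map.mp hy
  rw [List.mem_range'_1] at hs
  exact h s hs.1 (by omega)

end Kprod

lemma Edn_succ_self (q : ℂ) (f : ℕ → U) (i : ℕ) : Edn q f (i + 1) i = f i := by
  simp [Edn, EdnAux]

lemma Edn_eq_qCommutator (q : ℂ) (f : ℕ → U) {i j : ℕ} (h : i + 1 < j) :
    Edn q f j i = qCommutator q⁻¹ (Edn q f j (i + 1)) (f i) := by
  rw [Edn, Edn, show j - i - 1 = j - (i + 1) - 1 + 1 by omega, EdnAux,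
    show j - (j - (i + 1) - 1) - 2 = i by omega, qCommutator_apply]

lemma commute_Edn (q : ℂ) (f : ℕ → U) (x : U) {i j : ℕ} (hij : i < j)
    (h : ∀ s, i ≤ s → s < j → Commute x (f s)) : Commute x (Edn q f j i) := by
  obtain ⟨d, hd⟩ : ∃ d, j = i + d + 1 := ⟨j - i - 1, by omega⟩
  induction d generalizing i with
  | zero => exact hd ▸ Edn_succ_self q f i ▸ h i le_rfl (by omega)
  | succ d ih =>
    rw [Edn_eq_qCommutator q f (by omega)]
    exact SemiconjBy.qCommutator q⁻¹
      (ih (by omega) (fun s hs hsj => h s (by omega) hsj) (by omega)) (h i le_rfl hij)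

lemma cartan_of_adjacent {m s : ℕ} (h : m + 1 = s ∨ s + 1 = m) : cartan m s = -1 := by
  rw [cartan, if_neg (by omega), if_pos h]

lemma cartan_of_far {m s : ℕ} (h : m + 1 < s ∨ s + 1 < m) : cartan m s = 0 := by
  rw [cartan, if_neg (by omega), if_neg (by omega)]

structure LowerBorelRelations (q : ℂ) (n : ℕ) (f ka : ℕ → U) : Prop where
  semiconjBy_ka_f : ∀ m s, 1 ≤ m → m < n → 1 ≤ s → s < n →
    SemiconjBy (ka m) (f s) (q ^ (-cartan m s) • f s)
  commute_ka_ka : ∀ m s, 1 ≤ m → m < n → 1 ≤ s → s < n → Commute (ka m) (ka s)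
  commute_f_f : ∀ m s, 1 ≤ m → s < n → m + 1 < s → Commute (f m) (f s)

def rootCoproduct (q : ℂ) (f ka : ℕ → U) (i j : ℕ) : U ⊗[ℂ] U :=
  Kprod ka i j ⊗ₜ Edn q f j i + Edn q f j i ⊗ₜ (1 : U) +
    (q - q⁻¹) • ∑ c ∈ Finset.Ioo i j, (Edn q f c i * Kprod ka c j) ⊗ₜ Edn q f j c

namespace LowerBorelRelations

variable {q : ℂ} {n : ℕ} {f ka : ℕ → U}

lemma semiconjBy_of_adjacent (hR : LowerBorelRelations q n f ka) {m s : ℕ} (hm : 1 ≤ m)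
    (hmn : m < n) (hs : 1 ≤ s) (hsn : s < n) (h : m + 1 = s ∨ s + 1 = m) :
    SemiconjBy (ka m) (f s) (q • f s) := by
  simpa [cartan_of_adjacent h] using hR.semiconjBy_ka_f m s hm hmn hs hsn

lemma commute_of_far (hR : LowerBorelRelations q n f ka) {m s : ℕ} (hm : 1 ≤ m)
    (hmn : m < n) (hs : 1 ≤ s) (hsn : s < n) (h : m + 1 < s ∨ s + 1 < m) :
    Commute (ka m) (f s) := by
  have h' := hR.semiconjBy_ka_f m s hm hmn hs hsn
  rwa [cartan_of_far h, neg_zero, zpow_zero, one_smul] at h'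

lemma commute_ka_Kprod (hR : LowerBorelRelations q n f ka) {i c j : ℕ} (hi : 1 ≤ i)
    (hic : i < c) (hj : j ≤ n) : Commute (ka i) (Kprod ka c j) :=
  commute_Kprod ka _ fun s hs hsj => hR.commute_ka_ka i s hi (by omega) (by omega) (by omega)

lemma commute_f_Kprod (hR : LowerBorelRelations q n f ka) {i c j : ℕ} (hi : 1 ≤ i)
    (hic : i + 1 < c) (hj : j ≤ n) : Commute (f i) (Kprod ka c j) :=
  commute_Kprod ka _ fun s hs hsj =>
    (hR.commute_of_far (by omega) (by omega) hi (by omega) (Or.inr (by omega))).symm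

lemma commute_f_Edn (hR : LowerBorelRelations q n f ka) {i c j : ℕ} (hi : 1 ≤ i)
    (hic : i + 1 < c) (hcj : c < j) (hj : j ≤ n) : Commute (f i) (Edn q f j c) :=
  commute_Edn q f _ hcj fun s hs hsj => hR.commute_f_f i s hi (by omega) (by omega)

lemma semiconjBy_Kprod (hR : LowerBorelRelations q n f ka) {i j : ℕ} (hi : 1 ≤ i)
    (hij : i + 1 < j) (hj : j ≤ n) : SemiconjBy (Kprod ka (i + 1) j) (f i) (q • f i) := by
  rw [Kprod_eq_mul ka hij]
  exact (hR.semiconjBy_of_adjacent (by omega) (by omega) hi (by omega) (Or.inr rfl)).mul_left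
    (hR.commute_f_Kprod (c := i + 2) hi (by omega) hj).symm

lemma semiconjBy_Edn (hR : LowerBorelRelations q n f ka) {i j : ℕ} (hi : 1 ≤ i)
    (hij : i + 1 < j) (hj : j ≤ n) :
    SemiconjBy (ka i) (Edn q f j (i + 1)) (q • Edn q f j (i + 1)) := by
  have hadj := hR.semiconjBy_of_adjacent hi (by omega) (by omega) (by omega) (Or.inl rfl)
  rcases (show j = i + 2 ∨ i + 2 < j by omega) with rfl | hij'
  · rwa [Edn_succ_self]
  · rw [Edn_eq_qCommutator q f hij', ← map_smul]
    have hfar : Commute (ka i) (Edn q f j (i + 2)) := commute_Edn q f _ hij' fun s hs hsj =>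
      hR.commute_of_far hi (by omega) (by omega) (by omega) (Or.inl (by omega))
    exact hfar.qCommutator q⁻¹ hadj

lemma map_Edn_of_succ (hR : LowerBorelRelations q n f ka) (hq : q ≠ 0) (Δ : U →ₐ[ℂ] U ⊗[ℂ] U)
    {i j : ℕ} (hi : 1 ≤ i) (hij : i + 1 < j) (hj : j ≤ n)
    (hΔf : Δ (f i) = f i ⊗ₜ 1 + ka i ⊗ₜ f i)
    (ih : Δ (Edn q f j (i + 1)) = rootCoproduct q f ka (i + 1) j) :
    Δ (Edn q f j i) = rootCoproduct q f ka i j := by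
  have hqq : q⁻¹ * q = 1 := inv_mul_cancel₀ hq
  have hkK := hR.commute_ka_Kprod hi (lt_add_one i) hj
  have h1 : qCommutator q⁻¹ (Kprod ka (i + 1) j ⊗ₜ[ℂ] Edn q f j (i + 1)) (f i ⊗ₜ 1) =
      (q - q⁻¹) • ((f i * Kprod ka (i + 1) j) ⊗ₜ Edn q f j (i + 1)) := by
    rw [qCommutator_tmul_of_commute_right _ _ _ (Commute.one_right _),
      qCommutator_of_semiconjBy _ (hR.semiconjBy_Kprod hi hij hj), mul_one,
      TensorProduct.smul_tmul']
  have h2 : qCommutator q⁻¹ (Kprod ka (i + 1) j ⊗ₜ[ℂ] Edn q f j (i + 1)) (ka i ⊗ₜ f i) =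
      Kprod ka i j ⊗ₜ Edn q f j i := by
    rw [qCommutator_tmul_of_commute_left _ _ _ hkK.symm, ← hkK.eq, ← Kprod_eq_mul ka (by omega),
      ← Edn_eq_qCommutator q f hij]
  have h3 : qCommutator q⁻¹ (Edn q f j (i + 1) ⊗ₜ[ℂ] (1 : U)) (f i ⊗ₜ 1) =
      Edn q f j i ⊗ₜ 1 := by
    rw [qCommutator_tmul_of_commute_right _ _ _ (Commute.one_right _), mul_one,
      ← Edn_eq_qCommutator q f hij]
  have h4 : qCommutator q⁻¹ (Edn q f j (i + 1) ⊗ₜ[ℂ] (1 : U)) (ka i ⊗ₜ f i) = 0 := by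
    rw [qCommutator_tmul_of_commute_right _ _ _ (Commute.one_left _),
      qCommutator_eq_zero_of_semiconjBy hqq (hR.semiconjBy_Edn hi hij hj),
      TensorProduct.zero_tmul]
  have h5 : ∀ c ∈ Finset.Ioo (i + 1) j,
      qCommutator q⁻¹ ((Edn q f c (i + 1) * Kprod ka c j) ⊗ₜ[ℂ] Edn q f j c) (f i ⊗ₜ 1) =
        (Edn q f c i * Kprod ka c j) ⊗ₜ Edn q f j c := by
    intro c hc
    rw [Finset.mem_Ioo] at hc
    rw [qCommutator_tmul_of_commute_right _ _ _ (Commute.one_right _),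
      qCommutator_mul_left_of_commute _ (hR.commute_f_Kprod hi hc.1 hj), mul_one,
      ← Edn_eq_qCommutator q f hc.1]
  have h6 : ∀ c ∈ Finset.Ioo (i + 1) j,
      qCommutator q⁻¹ ((Edn q f c (i + 1) * Kprod ka c j) ⊗ₜ[ℂ] Edn q f j c) (ka i ⊗ₜ f i) =
        0 := by
    intro c hc
    rw [Finset.mem_Ioo] at hc
    have hk : SemiconjBy (ka i) (Edn q f c (i + 1) * Kprod ka c j)
        (q • (Edn q f c (i + 1) * Kprod ka c j)) := by
      rw [← smul_mul_assoc]
      exact (hR.semiconjBy_Edn hi hc.1 (by omega)).mul_right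
        (hR.commute_ka_Kprod hi (by omega) hj)
    rw [qCommutator_tmul_of_commute_right _ _ _ (hR.commute_f_Edn hi hc.1 hc.2 hj).symm,
      qCommutator_eq_zero_of_semiconjBy hqq hk, TensorProduct.zero_tmul]
  rw [Edn_eq_qCommutator q f hij, AlgHom.map_qCommutator, ih, hΔf, rootCoproduct]
  simp only [map_add, map_smul, map_sum, LinearMap.add_apply, LinearMap.smul_apply,
    LinearMap.sum_apply, h1, h2, h3, h4]
  rw [Finset.sum_congr rfl h5, Finset.sum_congr rfl h6, Finset.sum_const_zero, rootCoproduct,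
    ← Finset.Ico_add_one_left_eq_Ioo i j, ← Finset.Ioo_insert_left hij,
    Finset.sum_insert Finset.left_notMem_Ioo, Edn_succ_self]
  module

lemma map_Edn (hR : LowerBorelRelations q n f ka) (hq : q ≠ 0) (Δ : U →ₐ[ℂ] U ⊗[ℂ] U)
    (hΔf : ∀ s, 1 ≤ s → s < n → Δ (f s) = f s ⊗ₜ 1 + ka s ⊗ₜ f s) {i j : ℕ}
    (hi : 1 ≤ i) (hij : i < j) (hj : j ≤ n) :
    Δ (Edn q f j i) = rootCoproduct q f ka i j := by
  obtain ⟨d, hd⟩ : ∃ d, j = i + d + 1 := ⟨j - i - 1, by omega⟩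
  induction d generalizing i with
  | zero =>
    obtain rfl : j = i + 1 := hd
    rw [rootCoproduct, Edn_succ_self, Kprod_succ_self, hΔf i hi (by omega),
      ← Finset.Ico_add_one_left_eq_Ioo, Finset.Ico_self, Finset.sum_empty, smul_zero, add_zero,
      add_comm]
  | succ d ih =>
    exact hR.map_Edn_of_succ hq Δ hi (by omega) hj (hΔf i hi (by omega))
      (ih (by omega) (by omega) (by omega))

end LowerBorelRelations

open scoped TensorProduct in
theorem stmt16_general {U : Type*} [Ring U] [Algebra ℂ U]
    (q : ℂ) (hq0 : q ≠ 0)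
    (n : ℕ)
    (f ka kinv : ℕ → U)
    (hkk' : ∀ i, 1 ≤ i → i ≤ n - 1 → kinv i * ka i = 1)
    (hkcomm : ∀ i j, 1 ≤ i → i ≤ n - 1 → 1 ≤ j → j ≤ n - 1 → ka i * ka j = ka j * ka i)
    (hkf : ∀ i j, 1 ≤ i → i ≤ n - 1 → 1 ≤ j → j ≤ n - 1 →
      ka i * f j * kinv i = (q ^ (-cartan i j)) • f j)
    (hffcomm : ∀ i j, 1 ≤ i → i ≤ n - 1 → 1 ≤ j → j ≤ n - 1 → (i + 1 < j ∨ j + 1 < i) →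
      f i * f j = f j * f i)
    (Δ : U →ₐ[ℂ] (U ⊗[ℂ] U))
    (hΔf : ∀ i, 1 ≤ i → i ≤ n - 1 → Δ (f i) = f i ⊗ₜ[ℂ] 1 + ka i ⊗ₜ[ℂ] f i) :
    ∀ i j : ℕ, 1 ≤ i → i < j → j ≤ n →
      Δ (Edn q f j i) =
        Kprod ka i j ⊗ₜ[ℂ] Edn q f j i + Edn q f j i ⊗ₜ[ℂ] (1 : U) +
          (q - q⁻¹) • ∑ c ∈ Finset.Ioo i j,
            (Edn q f c i * Kprod ka c j) ⊗ₜ[ℂ] Edn q f j c := by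
  have hR : LowerBorelRelations q n f ka :=
    { semiconjBy_ka_f := fun m s hm hmn hs hsn => by
        rw [SemiconjBy, ← hkf m s hm (by omega) hs (by omega), mul_assoc (ka m * f s),
          hkk' m hm (by omega), mul_one]
      commute_ka_ka := fun m s hm hmn hs hsn => hkcomm m s hm (by omega) hs (by omega)
      commute_f_f := fun m s hm hsn hms =>
        hffcomm m s hm (by omega) (by omega) (by omega) (Or.inl hms) }
  intro i j hi hij hj
  exact hR.map_Edn hq0 Δ (fun s hs hsn => hΔf s hs (by omega)) hi hij hj

open scoped TensorProduct in
/-- in `U_q(sl_n(ℂ))` (formalized universally over algebras with elements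
satisfying the defining relations), if `Δ : U_q(sl_n) → U_q(sl_n) ⊗ U_q(sl_n)` is any
`ℂ`-algebra homomorphism with `Δ(e_i) = e_i ⊗ k_i⁻¹ + 1 ⊗ e_i`,
`Δ(f_i) = f_i ⊗ 1 + k_i ⊗ f_i`, `Δ(k_i^{±1}) = k_i^{±1} ⊗ k_i^{±1}`, then for `1 ≤ i < j ≤ n`:
`Δ(E_{j,i}) = K_{i,j} ⊗ E_{j,i} + E_{j,i} ⊗ 1 + (q − q⁻¹)·Σ_{i<c<j} E_{c,i}K_{c,j} ⊗ E_{j,c}`. -/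
theorem stmt16 {U : Type*} [Ring U] [Algebra ℂ U]
    (q : ℂ) (hq0 : q ≠ 0) (hq1 : q ≠ 1) (hqm1 : q ≠ -1)
    (n : ℕ) (hn : 2 ≤ n)
    (e f ka kinv : ℕ → U)
    (hkk : ∀ i, 1 ≤ i → i ≤ n - 1 → ka i * kinv i = 1)
    (hkk' : ∀ i, 1 ≤ i → i ≤ n - 1 → kinv i * ka i = 1)
    (hkcomm : ∀ i j, 1 ≤ i → i ≤ n - 1 → 1 ≤ j → j ≤ n - 1 → ka i * ka j = ka j * ka i)
    (hke : ∀ i j, 1 ≤ i → i ≤ n - 1 → 1 ≤ j → j ≤ n - 1 →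
      ka i * e j * kinv i = (q ^ cartan i j) • e j)
    (hkf : ∀ i j, 1 ≤ i → i ≤ n - 1 → 1 ≤ j → j ≤ n - 1 →
      ka i * f j * kinv i = (q ^ (-cartan i j)) • f j)
    (hef : ∀ i j, 1 ≤ i → i ≤ n - 1 → 1 ≤ j → j ≤ n - 1 →
      e i * f j - f j * e i = if i = j then (q - q⁻¹)⁻¹ • (ka i - kinv i) else 0)
    (hee : ∀ i j, 1 ≤ i → i ≤ n - 1 → 1 ≤ j → j ≤ n - 1 → (i + 1 = j ∨ j + 1 = i) →
      e i ^ 2 * e j - (q + q⁻¹) • (e i * e j * e i) + e j * e i ^ 2 = 0)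
    (hff : ∀ i j, 1 ≤ i → i ≤ n - 1 → 1 ≤ j → j ≤ n - 1 → (i + 1 = j ∨ j + 1 = i) →
      f i ^ 2 * f j - (q + q⁻¹) • (f i * f j * f i) + f j * f i ^ 2 = 0)
    (heecomm : ∀ i j, 1 ≤ i → i ≤ n - 1 → 1 ≤ j → j ≤ n - 1 → (i + 1 < j ∨ j + 1 < i) →
      e i * e j = e j * e i)
    (hffcomm : ∀ i j, 1 ≤ i → i ≤ n - 1 → 1 ≤ j → j ≤ n - 1 → (i + 1 < j ∨ j + 1 < i) →
      f i * f j = f j * f i)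
    (Δ : U →ₐ[ℂ] (U ⊗[ℂ] U))
    (hΔe : ∀ i, 1 ≤ i → i ≤ n - 1 → Δ (e i) = e i ⊗ₜ[ℂ] kinv i + 1 ⊗ₜ[ℂ] e i)
    (hΔf : ∀ i, 1 ≤ i → i ≤ n - 1 → Δ (f i) = f i ⊗ₜ[ℂ] 1 + ka i ⊗ₜ[ℂ] f i)
    (hΔk : ∀ i, 1 ≤ i → i ≤ n - 1 → Δ (ka i) = ka i ⊗ₜ[ℂ] ka i)
    (hΔkinv : ∀ i, 1 ≤ i → i ≤ n - 1 → Δ (kinv i) = kinv i ⊗ₜ[ℂ] kinv i) :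
    ∀ i j : ℕ, 1 ≤ i → i < j → j ≤ n →
      Δ (Edn q f j i) =
        Kprod ka i j ⊗ₜ[ℂ] Edn q f j i + Edn q f j i ⊗ₜ[ℂ] (1 : U) +
          (q - q⁻¹) • ∑ c ∈ Finset.Ioo i j,
            (Edn q f c i * Kprod ka c j) ⊗ₜ[ℂ] Edn q f j c :=
  stmt16_general q hq0 n f ka kinv hkk' hkcomm hkf hffcomm Δ hΔf
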